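/- Let g be a monic real-rooted polynomial of degree n ≥ 1 (g has n real roots counted with multiplicity), let θ > 0, and set c := D_{−θ} g. Then for every 0 ≤ j ≤ n, the j-th derivative c^{(j)} has exactly n−j distinct real roots. -/

import Mathlib

/-- The linear operator `D_θ` on real polynomials:
`D_θ f = Σ_{k≥0} (θ/2)^k f^{(2k)} / k!` (a finite sum). -/
noncomputable def Dop (θ : ℝ) (f : Polynomial ℝ) : Polynomial ℝ :=
  ∑ k ∈ Finset.range (f.natDegree + 1),
    Polynomial.C ((θ/2)^k / (k.factorial : ℝ)) * (Polynomial.derivative^[2*k] f)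

/-!
`D_θ` commutes with differentiation, so `c^{(j)} = D_{-θ}(g^{(j)})`, and `g^{(j)}` is again
real-rooted by Rolle's theorem. It therefore suffices to show that `D_{-θ}` sends a monic
real-rooted polynomial of degree `m` to one with `m` simple real roots. Factor the polynomial into
linear factors and use `D_{-θ}((X - a) f) = (X - a) D_{-θ} f - θ (D_{-θ} f)'`: if `p = D_{-θ} f`
has simple roots `r₀ < ⋯ < r_{m-1}`, then `q = (X - a) p - θ p'` equals `-θ p'(rᵢ)` at `rᵢ`, so
its sign alternates along the `rᵢ`; as `q` is monic of degree `m + 1`, the intermediate value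
theorem gives a root of `q` left of `r₀`, between any two consecutive `rᵢ`, and right of
`r_{m-1}`.
-/

open Polynomial Finset

lemma Dop_eq_sum_range (θ : ℝ) {f : ℝ[X]} {N : ℕ} (hN : f.natDegree < N) :
    Dop θ f = ∑ k ∈ range N, C ((θ / 2) ^ k / k.factorial) * derivative^[2 * k] f := by
  have hvanish : ∀ k ≥ f.natDegree + 1,
      C ((θ / 2) ^ k / k.factorial) * derivative^[2 * k] f = 0 := fun k hk => by
    rw [iterate_derivative_eq_zero (by omega), mul_zero]
  exact (eventually_constant_sum hvanish hN).symm

lemma derivative_Dop (θ : ℝ) (f : ℝ[X]) : derivative (Dop θ f) = Dop θ (derivative f) := by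
  rw [Dop_eq_sum_range θ (N := f.natDegree + 1) ((natDegree_derivative_le f).trans_lt (by omega)),
    Dop, map_sum]
  refine sum_congr rfl fun k _ => ?_
  rw [derivative_C_mul, ← Function.iterate_succ_apply' derivative, Function.iterate_succ_apply]

lemma iterate_derivative_Dop (θ : ℝ) (f : ℝ[X]) (j : ℕ) :
    derivative^[j] (Dop θ f) = Dop θ (derivative^[j] f) := by
  induction j with
  | zero => rfl
  | succ j ih =>
    rw [Function.iterate_succ_apply', ih, derivative_Dop, ← Function.iterate_succ_apply' derivative]

lemma Dop_one (θ : ℝ) : Dop θ 1 = 1 := by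
  simp [Dop]

lemma Dop_C_mul (θ c : ℝ) (f : ℝ[X]) : Dop θ (C c * f) = C c * Dop θ f := by
  rw [Dop_eq_sum_range θ (N := f.natDegree + 1) ((natDegree_C_mul_le c f).trans_lt (by omega)),
    Dop, mul_sum]
  refine sum_congr rfl fun k _ => ?_
  rw [iterate_derivative_C_mul, mul_left_comm]

lemma iterate_derivative_X_sub_C_mul (a : ℝ) (f : ℝ[X]) (n : ℕ) :
    derivative^[n] ((X - C a) * f) = (X - C a) * derivative^[n] f + n • derivative^[n - 1] f := by
  rw [sub_mul, iterate_derivative_sub, mul_comm X, iterate_derivative_mul_X,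
    iterate_derivative_C_mul]
  ring

-- Formally `D_θ = exp (θ ∂² / 2)`, and `[∂², X] = 2 ∂`.
lemma Dop_X_sub_C_mul (θ a : ℝ) (f : ℝ[X]) :
    Dop θ ((X - C a) * f) = (X - C a) * Dop θ f + C θ * derivative (Dop θ f) := by
  set N := f.natDegree + 1
  have hcoeff : ∀ j : ℕ, (θ / 2) ^ (j + 1) / (j + 1).factorial * (2 * (j + 1) : ℕ)
      = θ * ((θ / 2) ^ j / j.factorial) := fun j => by
    rw [Nat.factorial_succ]
    push_cast
    field_simp
    ring
  have hdeg : ((X - C a) * f).natDegree < N + 1 :=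
    (natDegree_mul_le.trans (by rw [natDegree_X_sub_C])).trans_lt (by omega)
  rw [derivative_Dop, Dop_eq_sum_range θ hdeg, Dop_eq_sum_range θ (N := N + 1) (by omega),
    Dop_eq_sum_range θ (N := N) ((natDegree_derivative_le f).trans_lt (by omega)), mul_sum,
    mul_sum]
  simp only [iterate_derivative_X_sub_C_mul, mul_add, sum_add_distrib]
  congr 1
  · exact sum_congr rfl fun k _ => by ring
  · rw [sum_range_succ' _ N]
    simp only [mul_zero, zero_smul, add_zero]
    refine sum_congr rfl fun j _ => ?_
    rw [show 2 * (j + 1) - 1 = 2 * j + 1 by omega, Function.iterate_succ_apply, nsmul_eq_mul,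
      ← C_eq_natCast, ← mul_assoc, ← C_mul, hcoeff, C_mul, mul_assoc]

lemma exists_mem_Ioo_eq_zero_of_mul_neg {f : ℝ → ℝ} (hf : Continuous f) {a b : ℝ} (hab : a ≤ b)
    (hsign : f a * f b < 0) : ∃ x ∈ Set.Ioo a b, f x = 0 := by
  rcases mul_neg_iff.mp hsign with ⟨ha, hb⟩ | ⟨ha, hb⟩
  · exact intermediate_value_Ioo' hab hf.continuousOn ⟨hb, ha⟩
  · exact intermediate_value_Ioo hab hf.continuousOn ⟨ha, hb⟩

theorem exists_strictMono_zeros_of_alternating {f : ℝ → ℝ} (hf : Continuous f) {k : ℕ}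
    {t : Fin (k + 1) → ℝ} (ht : Monotone t)
    (hsign : ∀ i : Fin (k + 1), 0 < (-1) ^ (k - i : ℕ) * f (t i)) :
    ∃ s : Fin k → ℝ, StrictMono s ∧ ∀ i, f (s i) = 0 := by
  have hchange : ∀ i : Fin k, f (t i.castSucc) * f (t i.succ) < 0 := fun i => by
    have h₁ := hsign i.castSucc
    have h₂ := hsign i.succ
    rw [Fin.val_castSucc, show k - i = (k - (i + 1)) + 1 by omega, pow_succ] at h₁
    rw [Fin.val_succ] at h₂
    rcases neg_one_pow_eq_or ℝ (k - (i + 1)) with h | h <;> rw [h] at h₁ h₂ <;> nlinarith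
  choose s hs hs0 using fun i =>
    exists_mem_Ioo_eq_zero_of_mul_neg hf (ht (Fin.castSucc_le_succ i)) (hchange i)
  refine ⟨s, fun i j hij => (hs i).2.trans ?_, hs0⟩
  exact (ht (Fin.succ_le_castSucc_iff.mpr hij)).trans_lt (hs j).1

theorem Polynomial.Monic.exists_gt_eval_pos {p : ℝ[X]} (hp : p.Monic) (hd : 0 < p.degree)
    (b : ℝ) : ∃ x, b < x ∧ 0 < p.eval x := by
  have hlim := p.tendsto_atTop_of_leadingCoeff_nonneg hd
    (by rw [hp.leadingCoeff]; exact zero_le_one)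
  exact ((Filter.eventually_gt_atTop b).and (hlim.eventually_gt_atTop 0)).exists

theorem Polynomial.Monic.exists_lt_neg_one_pow_mul_eval_pos {p : ℝ[X]} (hp : p.Monic)
    (hd : 0 < p.degree) (b : ℝ) : ∃ x, x < b ∧ 0 < (-1) ^ p.natDegree * p.eval x := by
  have hd' : 0 < ((-1) ^ p.natDegree * p.comp (-X)).degree := by simpa [degree_mul] using hd
  obtain ⟨y, hy, hpos⟩ := hp.neg_one_pow_natDegree_mul_comp_neg_X.exists_gt_eval_pos hd' (-b)
  refine ⟨-y, by linarith, by simpa using hpos⟩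

lemma eval_derivative_prod_X_sub_C {ι : Type*} [Fintype ι] [DecidableEq ι] (r : ι → ℝ) (i : ι) :
    (derivative (∏ j, (X - C (r j)))).eval (r i) = ∏ j ∈ univ.erase i, (r i - r j) := by
  rw [derivative_prod_finset, eval_finsetSum, sum_eq_single i]
  · simp [eval_prod]
  · intro j _ hji
    rw [eval_mul, eval_prod, prod_eq_zero (mem_erase.mpr ⟨Ne.symm hji, mem_univ i⟩) (by simp),
      zero_mul]
  · simp

lemma neg_one_pow_mul_prod_erase_sub_pos {m : ℕ} {r : Fin m → ℝ} (hr : StrictMono r) (i : Fin m) :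
    0 < (-1) ^ (m - 1 - i : ℕ) * ∏ j ∈ univ.erase i, (r i - r j) := by
  have hsplit : univ.erase i = Iio i ∪ Ioi i := by
    ext j
    simp
  rw [hsplit, prod_union (disjoint_Ioi_Iio i).symm, mul_left_comm, ← Fin.card_Ioi, ← prod_neg]
  refine mul_pos (prod_pos fun j hj => ?_) (prod_pos fun j hj => ?_)
  · exact sub_pos.2 (hr (mem_Iio.mp hj))
  · exact neg_sub (r i) (r j) ▸ sub_pos.2 (hr (mem_Ioi.mp hj))

lemma Polynomial.Monic.eq_prod_X_sub_C_of_injective {k : ℕ} {q : ℝ[X]} (hq : q.Monic)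
    (hdeg : q.natDegree = k) {s : Fin k → ℝ} (hs : Function.Injective s)
    (hroot : ∀ i, q.eval (s i) = 0) : q = ∏ i, (X - C (s i)) := by
  have hle : univ.val.map s ≤ q.roots :=
    (Multiset.le_iff_subset (univ.nodup.map hs)).2 fun x hx => by
      obtain ⟨i, -, rfl⟩ := Multiset.mem_map.mp hx
      exact (mem_roots hq.ne_zero).2 (hroot i)
  have heq : univ.val.map s = q.roots :=
    Multiset.eq_of_le_of_card_le hle (by simpa [hdeg] using card_roots' q)
  conv_lhs => rw [← prod_multiset_X_sub_C_of_monic_of_roots_card_eq hq (by rw [← heq]; simp [hdeg]),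
    ← heq, Multiset.map_map]
  rfl

section CommRing

variable {R : Type*} [CommRing R] [Nontrivial R]

lemma degree_C_mul_derivative_lt_degree_X_sub_C_mul {p : R[X]} (hp : p ≠ 0) (a θ : R) :
    (C θ * derivative p).degree < ((X - C a) * p).degree :=
  calc (C θ * derivative p).degree ≤ (derivative p).degree := by
        rw [← smul_eq_C_mul]
        exact degree_smul_le θ _
    _ < p.degree := degree_derivative_lt hp
    _ ≤ ((X - C a) * p).degree := by
      rw [(monic_X_sub_C a).degree_mul_comm, (monic_X_sub_C a).degree_mul, degree_X_sub_C]
      exact le_add_of_nonneg_right zero_le_one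

lemma Polynomial.Monic.X_sub_C_mul_sub_C_mul_derivative {p : R[X]} (hp : p.Monic) (a θ : R) :
    ((X - C a) * p - C θ * derivative p).Monic :=
  ((monic_X_sub_C a).mul hp).sub_of_left
    (degree_C_mul_derivative_lt_degree_X_sub_C_mul hp.ne_zero a θ)

lemma natDegree_X_sub_C_mul_sub_C_mul_derivative {p : R[X]} (hp : p ≠ 0) (a θ : R) :
    ((X - C a) * p - C θ * derivative p).natDegree = p.natDegree + 1 := by
  rw [natDegree_eq_of_degree_eq
      (degree_sub_eq_left_of_degree_lt (degree_C_mul_derivative_lt_degree_X_sub_C_mul hp a θ)),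
    (monic_X_sub_C a).natDegree_mul' hp, natDegree_X_sub_C, add_comm]

end CommRing

section IterateDerivative

variable {R : Type*} [Semiring R] [IsAddTorsionFree R]

lemma natDegree_iterate_derivative_eq (p : R[X]) (j : ℕ) :
    (derivative^[j] p).natDegree = p.natDegree - j := by
  induction j with
  | zero => rfl
  | succ j ih => rw [Function.iterate_succ_apply', natDegree_derivative, ih, Nat.sub_sub]

lemma iterate_derivative_ne_zero {p : R[X]} (hp : p ≠ 0) {j : ℕ} (hj : j ≤ p.natDegree) :
    derivative^[j] p ≠ 0 := by
  induction j with
  | zero => exact hp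
  | succ j _ =>
    rw [Function.iterate_succ_apply', derivative_ne_zero, natDegree_iterate_derivative_eq]
    omega

end IterateDerivative

lemma card_roots_iterate_derivative {p : ℝ[X]} (hp : p.roots.card = p.natDegree) (j : ℕ) :
    (derivative^[j] p).roots.card = p.natDegree - j := by
  refine le_antisymm ((card_roots' _).trans (natDegree_iterate_derivative p j)) ?_
  induction j with
  | zero => exact hp.ge
  | succ j ih =>
    have := card_roots_le_derivative (derivative^[j] p)
    rw [Function.iterate_succ_apply']
    omega

lemma Fin.strictMono_cons_snoc {α : Type*} [Preorder α] {m : ℕ} {r : Fin m → α}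
    (hr : StrictMono r) {L R : α} (hL : ∀ i, L < r i) (hR : ∀ i, r i < R) (hLR : L < R) :
    StrictMono (Fin.cons L (Fin.snoc r R) : Fin (m + 2) → α) := by
  refine Fin.strictMono_cons.2 ⟨Fin.lastCases (by simpa) fun i => by simpa using hL i, ?_⟩
  rw [← Fin.insertNth_last']
  exact (Fin.strictMono_insertNth_iff _ _ _).2
    ⟨hr, fun i _ => hR i, fun i h => absurd h (Fin.castSucc_lt_last i).not_ge⟩

theorem exists_strictMono_X_sub_C_mul_sub_C_mul_derivative_eq_prod {θ : ℝ} (hθ : 0 < θ) (a : ℝ)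
    {m : ℕ} {r : Fin m → ℝ} (hr : StrictMono r) :
    ∃ s : Fin (m + 1) → ℝ, StrictMono s ∧
      (X - C a) * ∏ i, (X - C (r i)) - C θ * derivative (∏ i, (X - C (r i)))
        = ∏ i, (X - C (s i)) := by
  set p := ∏ i, (X - C (r i)) with hp_def
  set q := (X - C a) * p - C θ * derivative p
  have hp : p.Monic := monic_prod_X_sub_C r univ
  have hq : q.Monic := hp.X_sub_C_mul_sub_C_mul_derivative a θ
  have hqdeg : q.natDegree = m + 1 := by
    rw [natDegree_X_sub_C_mul_sub_C_mul_derivative hp.ne_zero, hp_def,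
      natDegree_finsetProd_X_sub_C_eq_card, card_univ, Fintype.card_fin]
  have hqpos : 0 < q.degree := by
    rw [degree_eq_natDegree hq.ne_zero, hqdeg]
    exact_mod_cast m.succ_pos
  have hsign_root : ∀ i : Fin m, 0 < (-1) ^ (m - i : ℕ) * q.eval (r i) := fun i => by
    have hpi : p.eval (r i) = 0 := by simp [hp_def, eval_prod, prod_eq_zero (mem_univ i)]
    have hpos := mul_pos hθ (neg_one_pow_mul_prod_erase_sub_pos hr i)
    rw [show m - i = (m - 1 - i) + 1 by omega, pow_succ]
    simp only [q, eval_sub, eval_mul, hpi, eval_C]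
    rw [hp_def, eval_derivative_prod_X_sub_C]
    linarith
  obtain ⟨lo, hlo⟩ := (Set.finite_range r).bddBelow
  obtain ⟨hi, hhi⟩ := (Set.finite_range r).bddAbove
  obtain ⟨L, hL, hLsign⟩ := hq.exists_lt_neg_one_pow_mul_eval_pos hqpos lo
  obtain ⟨R, hR, hRsign⟩ := hq.exists_gt_eval_pos hqpos (max hi L)
  set t : Fin (m + 2) → ℝ := Fin.cons L (Fin.snoc r R)
  have ht : StrictMono t := Fin.strictMono_cons_snoc hr
    (fun i => hL.trans_le (hlo ⟨i, rfl⟩))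
    (fun i => (hhi ⟨i, rfl⟩).trans_lt ((le_max_left _ _).trans_lt hR))
    ((le_max_right _ _).trans_lt hR)
  have hsign : ∀ k : Fin (m + 2), 0 < (-1) ^ (m + 1 - k : ℕ) * q.eval (t k) := by
    refine Fin.cases ?_ (Fin.lastCases ?_ fun i => ?_)
    · simpa [t, hqdeg] using hLsign
    · simpa [t] using hRsign
    · simpa [t] using hsign_root i
  obtain ⟨s, hs, hs0⟩ := exists_strictMono_zeros_of_alternating q.continuous ht.monotone hsign
  exact ⟨s, hs, hq.eq_prod_X_sub_C_of_injective hqdeg hs.injective hs0⟩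

theorem exists_strictMono_Dop_neg_multiset_prod_eq {θ : ℝ} (hθ : 0 < θ) (S : Multiset ℝ) :
    ∃ s : Fin (Multiset.card S) → ℝ, StrictMono s ∧
      Dop (-θ) (S.map fun a => X - C a).prod = ∏ i, (X - C (s i)) := by
  induction S using Multiset.induction_on with
  | empty =>
    rw [Multiset.card_zero]
    exact ⟨Fin.elim0, fun i => i.elim0, by simp [Dop_one]⟩
  | cons a S ih =>
    obtain ⟨r, hr, hDr⟩ := ih
    obtain ⟨s, hs, hqs⟩ := exists_strictMono_X_sub_C_mul_sub_C_mul_derivative_eq_prod hθ a hr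
    rw [Multiset.card_cons]
    refine ⟨s, hs, ?_⟩
    rw [Multiset.map_cons, Multiset.prod_cons, Dop_X_sub_C_mul, hDr, ← hqs, map_neg]
    ring

lemma ncard_setOf_eval_C_mul_prod_X_sub_C_eq_zero {k : ℕ} {c : ℝ} (hc : c ≠ 0) {s : Fin k → ℝ}
    (hs : Function.Injective s) : {x | (C c * ∏ i, (X - C (s i))).eval x = 0}.ncard = k := by
  have hzeros : {x | (C c * ∏ i, (X - C (s i))).eval x = 0} = Set.range s := by
    ext x
    simp [eval_prod, hc, prod_eq_zero_iff, sub_eq_zero, eq_comm (a := x)]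
  rw [hzeros, Set.ncard_range_of_injective hs, Nat.card_eq_fintype_card, Fintype.card_fin]

theorem stmt13_general (g : Polynomial ℝ) (hmonic : g.Monic)
    (hroots : (g.roots).card = g.natDegree) (θ : ℝ) (hθ : 0 < θ) :
    ∀ j, j ≤ g.natDegree →
      {x : ℝ | (Polynomial.derivative^[j] (Dop (-θ) g)).eval x = 0}.ncard
        = g.natDegree - j := by
  intro j hj
  rw [iterate_derivative_Dop]
  set p := derivative^[j] g
  have hp : p ≠ 0 := iterate_derivative_ne_zero hmonic.ne_zero hj
  have hproots : p.roots.card = g.natDegree - j := card_roots_iterate_derivative hroots j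
  obtain ⟨s, hs, hDs⟩ := exists_strictMono_Dop_neg_multiset_prod_eq hθ p.roots
  have hfactor : p = C p.leadingCoeff * (p.roots.map fun a => X - C a).prod :=
    (C_leadingCoeff_mul_prod_multiset_X_sub_C
      (by rw [hproots, natDegree_iterate_derivative_eq])).symm
  rw [hfactor, Dop_C_mul, hDs,
    ncard_setOf_eval_C_mul_prod_X_sub_C_eq_zero (leadingCoeff_ne_zero.mpr hp) hs.injective,
    hproots]

/-- If `g` is monic, real-rooted of degree `n ≥ 1` (it has `n` real roots counted with
multiplicity), `θ > 0` and `c = D_{−θ} g`, then for every `0 ≤ j ≤ n` the derivative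
`c^{(j)}` has exactly `n − j` distinct real roots. -/
theorem stmt13 (g : Polynomial ℝ) (hmonic : g.Monic) (hn : 1 ≤ g.natDegree)
    (hroots : (g.roots).card = g.natDegree) (θ : ℝ) (hθ : 0 < θ) :
    ∀ j, j ≤ g.natDegree →
      {x : ℝ | (Polynomial.derivative^[j] (Dop (-θ) g)).eval x = 0}.ncard
        = g.natDegree - j :=
  stmt13_general g hmonic hroots θ hθ
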